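/- If a strongly connected digraph Γ has an arc of type (1, r) — i.e., an arc (x,y) with ∂(y,x) = r — then dim(Γ) ≤ |V(Γ)| − r. -/

import Mathlib

/-!  Common definitions for weak metric dimension of digraphs.

A digraph is modelled by a vertex type `V` together with an arc relation
`A : V → V → Prop` (simplicity is expressed by `Irreflexive A`). -/

/-- There is a directed walk of length `n` from `x` to `y`. -/
def walkLen {V : Type*} (A : V → V → Prop) : ℕ → V → V → Prop
  | 0 => fun x y => x = y
  | n + 1 => fun x y => ∃ z, A x z ∧ walkLen A n z y

/-- `∂(x,y)`: the length of a shortest directed path from `x` to `y`. -/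
noncomputable def ddist {V : Type*} (A : V → V → Prop) (x y : V) : ℕ :=
  sInf {n | walkLen A n x y}

/-- The two way distance `∂̃(x,y) = (∂(x,y), ∂(y,x))`. -/
noncomputable def twoDist {V : Type*} (A : V → V → Prop) (x y : V) : ℕ × ℕ :=
  (ddist A x y, ddist A y x)

/-- Strong connectivity: any vertex can be reached from any vertex by a directed walk. -/
def IsStronglyConnected {V : Type*} (A : V → V → Prop) : Prop :=
  ∀ x y : V, ∃ n, walkLen A n x y

/-- `S` is a weakly resolving set: distinct vertices have different tuples of
two way distances from the vertices of `S`. -/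
def IsWeaklyResolving {V : Type*} (A : V → V → Prop) (S : Set V) : Prop :=
  ∀ u v : V, (∀ w ∈ S, twoDist A w u = twoDist A w v) → u = v

/-- The weak metric dimension: minimum cardinality of a weakly resolving set. -/
noncomputable def wdim {V : Type*} [Fintype V] (A : V → V → Prop) : ℕ :=
  sInf {k | ∃ S : Finset V, S.card = k ∧ IsWeaklyResolving A ↑S}

/-- The diameter: the maximum of `∂(x,y)` over all ordered pairs of vertices. -/
noncomputable def diam {V : Type*} [Fintype V] (A : V → V → Prop) : ℕ :=
  sSup {m | ∃ x y : V, ddist A x y = m}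

/-- `f(n,d)`: the least positive integer `k` with `k + d^(2k) ≥ n`. -/
noncomputable def fnd (n d : ℕ) : ℕ :=
  sInf {k | 0 < k ∧ n ≤ k + d ^ (2 * k)}

/-- An isomorphism from `(V, A)` onto `(W, B)` exists. -/
def IsIsoTo {V W : Type*} (A : V → V → Prop) (B : W → W → Prop) : Prop :=
  ∃ e : V ≃ W, ∀ x y, A x y ↔ B (e x) (e y)

/-- The digraph of Example 2.3: vertices `v_1, …, v_n` are the elements
`0, …, n-1` of `Fin n` (so `v_i` is `i - 1`). -/
def egArc (n d : ℕ) : Fin n → Fin n → Prop := fun x y =>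
  (x.val = n - 1 ∧ y.val ≤ n - d) ∨
  (x.val ≤ n - d ∧ y.val = n - d + 1) ∨
  (n - d + 1 ≤ x.val ∧ x.val ≤ n - 2 ∧ y.val = x.val + 1)

/-- The `r`-th (0-based) coordinate of the tuple `v_{j+1}` in Construction 2.4;
it lies in `{1, …, d}` and `j = Σ_r (coord r - 1) d^r`. -/
def gcoord (d j r : ℕ) : ℕ := j / d ^ r % d + 1

/-- The arc relation of Construction 2.4, with the `u`-vertices `Fin k` on the left
and the `v`-vertices `Fin m` on the right of the sum. -/
def gammaArcKM (d k : ℕ) {m : ℕ} : Fin k ⊕ Fin m → Fin k ⊕ Fin m → Prop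
  | .inl _, .inl _ => False
  | .inl i, .inr j => gcoord d j.val (2 * i.val) = 1
  | .inr j, .inl i => gcoord d j.val (2 * i.val + 1) = 1
  | .inr j, .inr l => j ≠ l ∧ ∀ r < k,
      gcoord d l.val (2 * r) ≤ gcoord d j.val (2 * r) + 1 ∧
      gcoord d j.val (2 * r + 1) ≤ gcoord d l.val (2 * r + 1) + 1

/-- The arc relation of `Γ̄`: `Γ` of Construction 2.4 together with symmetric arcs
between any two distinct `u`-vertices. -/
def gammaBarArcKM (d k : ℕ) {m : ℕ} : Fin k ⊕ Fin m → Fin k ⊕ Fin m → Prop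
  | .inl i, .inl i' => i ≠ i'
  | x, y => gammaArcKM d k x y

/-- The directed cycle of length `m` on `Fin m`. -/
def cycArc (m : ℕ) [NeZero m] : Fin m → Fin m → Prop := fun x y => y = x + 1

/-- `σ` is an automorphism of the digraph `(V, A)`. -/
def IsDigraphAuto {V : Type*} (A : V → V → Prop) (σ : V ≃ V) : Prop :=
  ∀ a b, A a b ↔ A (σ a) (σ b)

/-- Vertex-transitivity. -/
def IsVertexTransitive {V : Type*} (A : V → V → Prop) : Prop :=
  ∀ x y : V, ∃ σ : V ≃ V, IsDigraphAuto A σ ∧ σ x = y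

/-- Weak distance-transitivity. -/
def IsWeaklyDistanceTransitive {V : Type*} (A : V → V → Prop) : Prop :=
  ∀ x y x' y' : V, twoDist A x y = twoDist A x' y' →
    ∃ σ : V ≃ V, IsDigraphAuto A σ ∧ σ x = x' ∧ σ y = y'

/-- Weak distance-regularity. -/
noncomputable def IsWeaklyDistanceRegular {V : Type*} (A : V → V → Prop) : Prop :=
  ∀ i j : ℕ × ℕ, (∃ a b : V, twoDist A a b = i) → (∃ a b : V, twoDist A a b = j) →
    ∀ x y x' y' : V, twoDist A x y = twoDist A x' y' →
      Set.ncard {z : V | twoDist A x z = i ∧ twoDist A z y = j} =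
      Set.ncard {z : V | twoDist A x' z = i ∧ twoDist A z y' = j}

/-- The complete digraph `K_t`. -/
def Krel (t : ℕ) : Fin t → Fin t → Prop := fun x y => x ≠ y

/-- The null digraph `K̄_t`. -/
def Nrel (t : ℕ) : Fin t → Fin t → Prop := fun _ _ => False

/-- The directed path `P_2` of length `1`. -/
def P2rel : Fin 2 → Fin 2 → Prop := fun x y => x = 0 ∧ y = 1

/-- The digraph `G_1` on `{0,1,2}` with arcs `(0,1),(1,2),(2,1),(2,0)`. -/
def G1rel : Fin 3 → Fin 3 → Prop := fun x y =>
  (x = 0 ∧ y = 1) ∨ (x = 1 ∧ y = 2) ∨ (x = 2 ∧ y = 1) ∨ (x = 2 ∧ y = 0)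

/-- The digraph `G_2` on `{0,1,2}` with arcs `(0,1),(1,0),(1,2),(2,1),(2,0)`. -/
def G2rel : Fin 3 → Fin 3 → Prop := fun x y =>
  (x = 0 ∧ y = 1) ∨ (x = 1 ∧ y = 0) ∨ (x = 1 ∧ y = 2) ∨ (x = 2 ∧ y = 1) ∨ (x = 2 ∧ y = 0)

/-- The generalized lexicographic product `G[H₀, H₁, H₂]` for a digraph `G` on `{0,1,2}`. -/
def glex3 {α β γ : Type*} (G : Fin 3 → Fin 3 → Prop)
    (H0 : α → α → Prop) (H1 : β → β → Prop) (H2 : γ → γ → Prop) :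
    α ⊕ β ⊕ γ → α ⊕ β ⊕ γ → Prop
  | .inl x, .inl y => H0 x y
  | .inl _, .inr (.inl _) => G 0 1
  | .inl _, .inr (.inr _) => G 0 2
  | .inr (.inl _), .inl _ => G 1 0
  | .inr (.inl x), .inr (.inl y) => H1 x y
  | .inr (.inl _), .inr (.inr _) => G 1 2
  | .inr (.inr _), .inl _ => G 2 0
  | .inr (.inr _), .inr (.inl _) => G 2 1
  | .inr (.inr x), .inr (.inr y) => H2 x y

/-- A clique in a digraph: the two way distance between any two distinct
vertices of `S` is `(1,1)`. -/
noncomputable def DClique {V : Type*} (A : V → V → Prop) (S : Set V) : Prop :=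
  ∀ u ∈ S, ∀ v ∈ S, u ≠ v → twoDist A u v = (1, 1)

/-- An independent set in a digraph: no arcs inside `R`. -/
def DIndependent {V : Type*} (A : V → V → Prop) (R : Set V) : Prop :=
  ∀ u ∈ R, ∀ v ∈ R, ¬ A u v

/-! A shortest walk from `y` to `x` passes through a vertex at distance exactly `i` from `y` for
every `i ≤ r`. Choosing one such vertex for each `i = 1, …, r` gives a set `T` of `r` vertices on
which `∂(y, ·)` is injective, and the remaining `|V| - r` vertices, `y` among them, resolve: each of
them is the only vertex at distance `0` from itself, and `y` separates the vertices of `T`. -/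

section WalkDistance

variable {V : Type*} {A : V → V → Prop}

theorem walkLen_add_iff {m n : ℕ} {x z : V} :
    walkLen A (m + n) x z ↔ ∃ y, walkLen A m x y ∧ walkLen A n y z := by
  induction m generalizing x with
  | zero => simp [walkLen]
  | succ m ih =>
    rw [Nat.add_right_comm]
    simp only [walkLen, ih]
    constructor
    · rintro ⟨w, hxw, y, hwy, hyz⟩
      exact ⟨y, ⟨w, hxw, hwy⟩, hyz⟩
    · rintro ⟨y, ⟨w, hxw, hwy⟩, hyz⟩
      exact ⟨w, hxw, y, hwy, hyz⟩

theorem ddist_le_of_walkLen {n : ℕ} {x y : V} (h : walkLen A n x y) : ddist A x y ≤ n :=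
  Nat.sInf_le h

theorem walkLen_ddist {x y : V} (h : ∃ n, walkLen A n x y) : walkLen A (ddist A x y) x y :=
  Nat.sInf_mem h

@[simp]
theorem ddist_self (x : V) : ddist A x x = 0 :=
  Nat.eq_zero_of_le_zero (ddist_le_of_walkLen (n := 0) rfl)

theorem eq_of_ddist_eq_zero {x y : V} (h : ∃ n, walkLen A n x y) (h0 : ddist A x y = 0) :
    x = y := by
  simpa [h0, walkLen] using walkLen_ddist h

theorem ddist_le_add {x y z : V} (hxy : ∃ n, walkLen A n x y) (hyz : ∃ n, walkLen A n y z) :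
    ddist A x z ≤ ddist A x y + ddist A y z :=
  ddist_le_of_walkLen (walkLen_add_iff.mpr ⟨y, walkLen_ddist hxy, walkLen_ddist hyz⟩)

theorem exists_ddist_eq_of_le {x y : V} (h : ∃ n, walkLen A n y x) {i : ℕ}
    (hi : i ≤ ddist A y x) : ∃ v, ddist A y v = i := by
  have hwalk := walkLen_ddist h
  rw [← Nat.add_sub_cancel' hi] at hwalk
  obtain ⟨v, hyv, hvx⟩ := walkLen_add_iff.mp hwalk
  have htri := ddist_le_add ⟨_, hyv⟩ ⟨_, hvx⟩
  have hyv_le := ddist_le_of_walkLen hyv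
  have hvx_le := ddist_le_of_walkLen hvx
  exact ⟨v, by omega⟩

theorem exists_finset_image_ddist_eq_Icc {x y : V} (h : ∃ n, walkLen A n y x) :
    ∃ T : Finset V, T.image (ddist A y) = Finset.Icc 1 (ddist A y x) ∧
      T.card = ddist A y x := by
  classical
  have : Nonempty V := ⟨x⟩
  choose! v hv using fun i (hi : i ∈ Finset.Icc 1 (ddist A y x)) =>
    exists_ddist_eq_of_le h (Finset.mem_Icc.mp hi).2
  set I := Finset.Icc 1 (ddist A y x)
  have himage : (I.image v).image (ddist A y) = I := by
    rw [Finset.image_image]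
    exact (Finset.image_congr hv).trans Finset.image_id
  have hI : I.card = ddist A y x := by simp [I]
  refine ⟨_, himage, le_antisymm (Finset.card_image_le.trans hI.le) ?_⟩
  calc ddist A y x = ((I.image v).image (ddist A y)).card := by rw [himage, hI]
    _ ≤ _ := Finset.card_image_le

end WalkDistance

section WeaklyResolving

variable {V : Type*} {A : V → V → Prop}

theorem IsWeaklyResolving.of_injOn_compl (hsc : IsStronglyConnected A) {S : Set V} {w : V}
    (hw : w ∈ S) (hinj : Set.InjOn (ddist A w) Sᶜ) : IsWeaklyResolving A S := by
  intro u v h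
  by_cases hu : u ∈ S
  · exact eq_of_ddist_eq_zero (hsc u v)
      (by simpa [twoDist] using (congrArg Prod.fst (h u hu)).symm)
  by_cases hv : v ∈ S
  · exact (eq_of_ddist_eq_zero (hsc v u)
      (by simpa [twoDist] using congrArg Prod.fst (h v hv))).symm
  exact hinj hu hv (congrArg Prod.fst (h w hw))

theorem wdim_le_card [Fintype V] {S : Finset V} (hS : IsWeaklyResolving A S) :
    wdim A ≤ S.card :=
  Nat.sInf_le ⟨S, rfl, hS⟩

end WeaklyResolving

theorem wdim_le_of_arc_type_general {V : Type*} [Fintype V] (A : V → V → Prop)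
    (hsc : IsStronglyConnected A)
    (x y : V) (r : ℕ) (htype : ddist A y x = r) :
    wdim A ≤ Fintype.card V - r := by
  classical
  subst htype
  obtain ⟨T, hTimage, hTcard⟩ := exists_finset_image_ddist_eq_Icc (hsc y x)
  have hinj : Set.InjOn (ddist A y) T :=
    Finset.card_image_iff.mp (by rw [hTimage, hTcard, Nat.card_Icc, Nat.add_sub_cancel])
  have hyT : y ∉ T := fun hy => by
    simpa [hTimage] using Finset.mem_image_of_mem (ddist A y) hy
  have hres : IsWeaklyResolving A ↑Tᶜ :=
    IsWeaklyResolving.of_injOn_compl hsc (by simpa using hyT) (by simpa using hinj)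
  calc wdim A ≤ Tᶜ.card := wdim_le_card hres
    _ = Fintype.card V - ddist A y x := by rw [Finset.card_compl, hTcard]

/-- Lemma 4.5. If a digraph `Γ` has an arc of type `(1,r)`,
then `dim(Γ) ≤ |V(Γ)| - r`. -/
theorem wdim_le_of_arc_type {V : Type*} [Fintype V] (A : V → V → Prop)
    (hirr : Irreflexive A) (hsc : IsStronglyConnected A)
    (x y : V) (r : ℕ) (harc : A x y) (htype : ddist A y x = r) :
    wdim A ≤ Fintype.card V - r :=
  wdim_le_of_arc_type_general A hsc x y r htype
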